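/- Let k ≥ 0 and n > 2k + 1 be integers, and let σ be a facet of the Vietoris–Rips complex VR(ℤ²;k). Then π_n(σ) is a facet of the Vietoris–Rips complex VR(ℤ²/G_n;k). -/
import Mathlib

/-- The ℓ¹ metric on `ℤ × ℤ`. -/
def dZ2 (x y : ℤ × ℤ) : ℤ := |x.1 - y.1| + |x.2 - y.2|

/-- `σ` is a simplex of the Vietoris–Rips complex `VR(V; k)` of the metric space `V`
with (integer-valued) distance `d`: a finite nonempty subset of diameter at most `k`. -/
def IsVRSimplex {V : Type*} (d : V → V → ℤ) (k : ℤ) (σ : Finset V) : Prop :=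
  σ.Nonempty ∧ ∀ x ∈ σ, ∀ y ∈ σ, d x y ≤ k

/-- `σ` is a facet (maximal simplex) of the Vietoris–Rips complex `VR(V; k)`. -/
def IsVRFacet {V : Type*} (d : V → V → ℤ) (k : ℤ) (σ : Finset V) : Prop :=
  IsVRSimplex d k σ ∧ ∀ τ : Finset V, IsVRSimplex d k τ → σ ⊆ τ → σ = τ

/-- The circular metric on `ZMod n` (shortest-path metric of the cycle graph `C_n`). -/
def cZdist (n : ℕ) (x y : ZMod n) : ℤ := min ((x - y).val : ℤ) ((y - x).val : ℤ)

/-- The ℓ¹ (quotient) metric on the `n × n` torus grid `T_{n,n} = ℤ²/G_n`,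
realized on `ZMod n × ZMod n`. -/
def tdist (n : ℕ) (x y : ZMod n × ZMod n) : ℤ := cZdist n x.1 y.1 + cZdist n x.2 y.2

/-- The quotient map `π_n : ℤ² → ℤ²/G_n`, where `G_n = nℤ × nℤ` and the quotient
is realized as `ZMod n × ZMod n`. -/
def proj (n : ℕ) (x : ℤ × ℤ) : ZMod n × ZMod n := ((x.1 : ZMod n), (x.2 : ZMod n))

/-! ### Auxiliary lemmas -/

lemma abs4 (A B c : ℤ) : |A| + |B| ≤ c ↔ |A + B| ≤ c ∧ |A - B| ≤ c := by
  rcases abs_cases A with ⟨h1, h2⟩ | ⟨h1, h2⟩ <;>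
  rcases abs_cases B with ⟨h3, h4⟩ | ⟨h3, h4⟩ <;>
  rcases abs_cases (A + B) with ⟨h5, h6⟩ | ⟨h5, h6⟩ <;>
  rcases abs_cases (A - B) with ⟨h7, h8⟩ | ⟨h7, h8⟩ <;> omega

lemma dZ2_le_iff (p q : ℤ × ℤ) (c : ℤ) :
    dZ2 p q ≤ c ↔ |(p.1 + p.2) - (q.1 + q.2)| ≤ c ∧ |(p.1 - p.2) - (q.1 - q.2)| ≤ c := by
  have e1 : (p.1 + p.2) - (q.1 + q.2) = (p.1 - q.1) + (p.2 - q.2) := by ring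
  have e2 : (p.1 - p.2) - (q.1 - q.2) = (p.1 - q.1) - (p.2 - q.2) := by ring
  rw [e1, e2]
  exact abs4 _ _ _

lemma dZ2_comm (x y : ℤ × ℤ) : dZ2 x y = dZ2 y x := by
  unfold dZ2; rw [abs_sub_comm, abs_sub_comm x.2]

lemma emod_le_self {n m : ℤ} (hn : 0 < n) (hm : 0 ≤ m) : m % n ≤ m := by
  have h1 : 0 ≤ m / n := Int.ediv_nonneg hm hn.le
  have h2 : 0 ≤ n * (m / n) := mul_nonneg hn.le h1
  rw [Int.emod_def]
  linarith

lemma cZdist_eq (n : ℕ) [NeZero n] (x y : ℤ) :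
    cZdist n (x : ZMod n) (y : ZMod n) = min ((x - y) % n) ((y - x) % n) := by
  unfold cZdist
  rw [show ((x : ZMod n) - (y : ZMod n)) = ((x - y : ℤ) : ZMod n) by push_cast; ring,
    show ((y : ZMod n) - (x : ZMod n)) = ((y - x : ℤ) : ZMod n) by push_cast; ring,
    ZMod.val_intCast, ZMod.val_intCast]

lemma cZdist_le (n : ℕ) [NeZero n] (x y : ℤ) :
    cZdist n (x : ZMod n) (y : ZMod n) ≤ |x - y| := by
  have hn : 0 < (n : ℤ) := by exact_mod_cast Nat.pos_of_ne_zero (NeZero.ne n)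
  rw [cZdist_eq]
  rcases le_total x y with h | h
  · calc min ((x - y) % n) ((y - x) % n) ≤ (y - x) % n := min_le_right _ _
      _ ≤ y - x := emod_le_self hn (by omega)
      _ ≤ |x - y| := by rw [abs_sub_comm]; exact le_abs_self _
  · calc min ((x - y) % n) ((y - x) % n) ≤ (x - y) % n := min_le_left _ _
      _ ≤ x - y := emod_le_self hn (by omega)
      _ ≤ |x - y| := le_abs_self _

lemma cZdist_lift (n : ℕ) [NeZero n] (x y : ℤ) :
    ∃ p : ℤ, |x + p * n - y| ≤ cZdist n (x : ZMod n) (y : ZMod n) := by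
  have hn : ((n : ℤ)) ≠ 0 := by exact_mod_cast NeZero.ne n
  rw [cZdist_eq]
  rcases min_cases ((x - y) % n) ((y - x) % n) with ⟨he, _⟩ | ⟨he, _⟩ <;> rw [he]
  · refine ⟨-((x - y) / n), ?_⟩
    have e : x + (-((x - y) / n)) * n - y = (x - y) % n := by
      rw [Int.emod_def]; ring
    rw [e, abs_of_nonneg (Int.emod_nonneg _ hn)]
  · refine ⟨(y - x) / n, ?_⟩
    have e : x + ((y - x) / n) * n - y = -((y - x) % n) := by
      rw [Int.emod_def]; ring
    rw [e, abs_neg, abs_of_nonneg (Int.emod_nonneg _ hn)]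

lemma tdist_le_dZ2 (n : ℕ) [NeZero n] (x y : ℤ × ℤ) :
    tdist n (proj n x) (proj n y) ≤ dZ2 x y := by
  unfold tdist proj dZ2
  exact add_le_add (cZdist_le n x.1 y.1) (cZdist_le n x.2 y.2)

lemma gap_lemma (n k U a : ℤ) (hk : 0 ≤ k) (hn : 2 * k + 2 ≤ n)
    (h : ∀ m, a ≤ m → m ≤ a + k → ∃ p : ℤ, |U + p * n - m| ≤ k) :
    ∃ p : ℤ, a ≤ U + p * n ∧ U + p * n ≤ a + k := by
  obtain ⟨p0, hp0⟩ := h a le_rfl (by omega)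
  have hp0' := abs_le.mp hp0
  rcases le_or_gt a (U + p0 * n) with h0 | h0
  · exact ⟨p0, h0, by omega⟩
  · obtain ⟨p1, hp1⟩ := h (a + k) (by omega) le_rfl
    have hp1' := abs_le.mp hp1
    refine ⟨p1, by omega, ?_⟩
    by_contra hcon
    push_neg at hcon
    obtain ⟨p2, hp2⟩ := h (U + p0 * n + k + 1) (by omega) (by omega)
    have hp2' := abs_le.mp hp2
    have e : U + p2 * n - (U + p0 * n) = (p2 - p0) * n := by ring
    have hlow : 1 ≤ (p2 - p0) * n := by rw [← e]; omega
    have hhigh : (p2 - p0) * n ≤ 2 * k + 1 := by rw [← e]; omega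
    have hd : 1 ≤ p2 - p0 := by
      by_contra hd'
      push_neg at hd'
      have : (p2 - p0) * n ≤ 0 :=
        mul_nonpos_iff.mpr (Or.inr ⟨by omega, by omega⟩)
      linarith
    have : n ≤ (p2 - p0) * n := le_mul_of_one_le_left (by omega) hd
    linarith

lemma force_lemma (n c p p' U x : ℤ) (hn : c < n) (hc : 0 ≤ c)
    (h1 : |U + p * n - x| ≤ c) (h2 : U + p' * n = x) : p = p' := by
  have e : U + p * n - x = (p - p') * n := by rw [← h2]; ring
  rw [e] at h1
  have h1' := abs_le.mp h1
  by_contra hne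
  rcases lt_or_gt_of_ne (sub_ne_zero.mpr hne) with hlt | hgt
  · have h3 : p - p' ≤ -1 := by omega
    have : (p - p') * n ≤ (-1) * n := mul_le_mul_of_nonneg_right h3 (by omega)
    linarith
  · have h3 : 1 ≤ p - p' := by omega
    have : 1 * n ≤ (p - p') * n := mul_le_mul_of_nonneg_right h3 (by omega)
    linarith

theorem stmt5 (k : ℤ) (n : ℕ) (hk : 0 ≤ k) (hn : 2 * k + 1 < (n : ℤ))
    (σ : Finset (ℤ × ℤ)) (hσ : IsVRFacet dZ2 k σ) :
    IsVRFacet (tdist n) k (σ.image (proj n)) := by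
  haveI : NeZero n := ⟨by intro h0; subst h0; simp at hn; omega⟩
  obtain ⟨⟨hne, hdiam⟩, hmaxfacet⟩ := hσ
  set a := σ.inf' hne (fun x => x.1 + x.2) with ha0
  set A := σ.sup' hne (fun x => x.1 + x.2) with hA0
  set b := σ.inf' hne (fun x => x.1 - x.2) with hb0
  set B := σ.sup' hne (fun x => x.1 - x.2) with hB0
  have hua : ∀ x ∈ σ, a ≤ x.1 + x.2 := by
    rw [ha0]; exact fun x hx => Finset.inf'_le _ hx
  have huA : ∀ x ∈ σ, x.1 + x.2 ≤ A := by
    rw [hA0]; exact fun x hx => Finset.le_sup' (fun x : ℤ × ℤ => x.1 + x.2) hx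
  have hvb : ∀ x ∈ σ, b ≤ x.1 - x.2 := by
    rw [hb0]; exact fun x hx => Finset.inf'_le _ hx
  have hvB : ∀ x ∈ σ, x.1 - x.2 ≤ B := by
    rw [hB0]; exact fun x hx => Finset.le_sup' (fun x : ℤ × ℤ => x.1 - x.2) hx
  have hdle : ∀ x ∈ σ, ∀ y ∈ σ,
      |(x.1 + x.2) - (y.1 + y.2)| ≤ k ∧ |(x.1 - x.2) - (y.1 - y.2)| ≤ k :=
    fun x hx y hy => (dZ2_le_iff x y k).mp (hdiam x hx y hy)
  have hAa : A ≤ a + k := by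
    obtain ⟨y, hy, hyA⟩ := Finset.exists_mem_eq_sup' hne (fun x : ℤ × ℤ => x.1 + x.2)
    obtain ⟨x, hx, hxa⟩ := Finset.exists_mem_eq_inf' hne (fun x : ℤ × ℤ => x.1 + x.2)
    have h := abs_le.mp (hdle y hy x hx).1
    omega
  have hBb : B ≤ b + k := by
    obtain ⟨y, hy, hyA⟩ := Finset.exists_mem_eq_sup' hne (fun x : ℤ × ℤ => x.1 - x.2)
    obtain ⟨x, hx, hxa⟩ := Finset.exists_mem_eq_inf' hne (fun x : ℤ × ℤ => x.1 - x.2)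
    have h := abs_le.mp (hdle y hy x hx).2
    omega
  have hmax : ∀ p : ℤ × ℤ, (∀ x ∈ σ, dZ2 p x ≤ k) → p ∈ σ := by
    intro p hp
    have hsimp : IsVRSimplex dZ2 k (insert p σ) := by
      refine ⟨⟨p, Finset.mem_insert_self p σ⟩, ?_⟩
      intro x hx y hy
      rcases Finset.mem_insert.mp hx with rfl | hx' <;>
      rcases Finset.mem_insert.mp hy with rfl | hy'
      · simpa [dZ2] using hk
      · exact hp y hy'
      · rw [dZ2_comm]; exact hp x hx'
      · exact hdiam x hx' y hy'
    have := hmaxfacet _ hsimp (Finset.subset_insert p σ)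
    rw [this]
    exact Finset.mem_insert_self p σ
  have haA : a ≤ A := by
    obtain ⟨x, hx⟩ := hne
    exact le_trans (hua x hx) (huA x hx)
  have hbB : b ≤ B := by
    obtain ⟨x, hx⟩ := hne
    exact le_trans (hvb x hx) (hvB x hx)
  have hAeq : A = a + k := by
    rcases (by omega : k = 0 ∨ 1 ≤ k) with hk0 | hk1
    · omega
    · have hpar : ∃ c', (b ≤ c' ∧ c' ≤ b + 1) ∧ (a + k + c') % 2 = 0 := by
        rcases Int.even_or_odd (a + k + b) with ⟨r, hr⟩ | ⟨r, hr⟩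
        · exact ⟨b, ⟨le_rfl, by omega⟩, by omega⟩
        · exact ⟨b + 1, ⟨by omega, le_rfl⟩, by omega⟩
      obtain ⟨c', ⟨hc1, hc2⟩, hpar'⟩ := hpar
      obtain ⟨e, he⟩ : (2:ℤ) ∣ (a + k + c') := by omega
      have hp : (e, a + k - e) ∈ σ := by
        apply hmax
        intro x hx
        rw [dZ2_le_iff]
        have h1 := hua x hx; have h2 := huA x hx
        have h3 := hvb x hx; have h4 := hvB x hx
        constructor <;> · rw [abs_le]; dsimp only; omega
      have := huA _ hp
      dsimp only at this
      omega
  have hBeq : B = b + k := by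
    rcases (by omega : k = 0 ∨ 1 ≤ k) with hk0 | hk1
    · omega
    · have hpar : ∃ c', (a ≤ c' ∧ c' ≤ a + 1) ∧ (b + k + c') % 2 = 0 := by
        rcases Int.even_or_odd (b + k + a) with ⟨r, hr⟩ | ⟨r, hr⟩
        · exact ⟨a, ⟨le_rfl, by omega⟩, by omega⟩
        · exact ⟨a + 1, ⟨by omega, le_rfl⟩, by omega⟩
      obtain ⟨c', ⟨hc1, hc2⟩, hpar'⟩ := hpar
      obtain ⟨e, he⟩ : (2:ℤ) ∣ (b + k + c') := by omega
      have hp : (e, e - (b + k)) ∈ σ := by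
        apply hmax
        intro x hx
        rw [dZ2_le_iff]
        have h1 := hua x hx; have h2 := huA x hx
        have h3 := hvb x hx; have h4 := hvB x hx
        constructor <;> · rw [abs_le]; dsimp only; omega
      have := hvB _ hp
      dsimp only at this
      omega
  have hmem : ∀ x : ℤ × ℤ, x ∈ σ ↔
      (a ≤ x.1 + x.2 ∧ x.1 + x.2 ≤ a + k ∧ b ≤ x.1 - x.2 ∧ x.1 - x.2 ≤ b + k) := by
    intro x
    constructor
    · intro hx
      have h2 := huA x hx; have h4 := hvB x hx
      exact ⟨hua x hx, by omega, hvb x hx, by omega⟩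
    · rintro ⟨h1, h2, h3, h4⟩
      apply hmax
      intro y hy
      rw [dZ2_le_iff]
      have g1 := hua y hy; have g2 := huA y hy
      have g3 := hvb y hy; have g4 := hvB y hy
      constructor <;> · rw [abs_le]; omega
  have hab : (a + b) % 2 = 0 ∨ 1 ≤ k := by
    rcases (by omega : k = 0 ∨ 1 ≤ k) with hk0 | hk1
    · left
      obtain ⟨x, hx⟩ := hne
      have h1 := hua x hx; have h2 := huA x hx
      have h3 := hvb x hx; have h4 := hvB x hx
      omega
    · right; exact hk1
  have pick : ∀ m c : ℤ, a ≤ m → m ≤ a + k → b ≤ c → c ≤ b + k →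
      ∃ x ∈ σ, x.1 + x.2 = m ∧ |x.1 - x.2 - c| ≤ 1 := by
    intro m c hm1 hm2 hc1 hc2
    have hex : ∃ c', b ≤ c' ∧ c' ≤ b + k ∧ |c' - c| ≤ 1 ∧ (m + c') % 2 = 0 := by
      by_cases hpar : (m + c) % 2 = 0
      · exact ⟨c, hc1, hc2, by simp, hpar⟩
      · have hk1 : 1 ≤ k := by
          rcases hab with h' | h'
          · by_contra hck; push_neg at hck; omega
          · exact h'
        by_cases hcb : c + 1 ≤ b + k
        · exact ⟨c + 1, by omega, hcb, by rw [abs_le]; omega, by omega⟩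
        · exact ⟨c - 1, by omega, by omega, by rw [abs_le]; omega, by omega⟩
    obtain ⟨c', hc'1, hc'2, hc'3, hc'4⟩ := hex
    obtain ⟨e, he⟩ : (2:ℤ) ∣ (m + c') := by omega
    refine ⟨(e, m - e), (hmem _).mpr ?_, ?_, ?_⟩
    · refine ⟨?_, ?_, ?_, ?_⟩ <;> · dsimp only; omega
    · dsimp only; omega
    · dsimp only
      rw [show e - (m - e) - c = c' - c by omega]
      exact hc'3
  have pick' : ∀ m c : ℤ, b ≤ m → m ≤ b + k → a ≤ c → c ≤ a + k →
      ∃ x ∈ σ, x.1 - x.2 = m ∧ |x.1 + x.2 - c| ≤ 1 := by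
    intro m c hm1 hm2 hc1 hc2
    have hex : ∃ c', a ≤ c' ∧ c' ≤ a + k ∧ |c' - c| ≤ 1 ∧ (m + c') % 2 = 0 := by
      by_cases hpar : (m + c) % 2 = 0
      · exact ⟨c, hc1, hc2, by simp, hpar⟩
      · have hk1 : 1 ≤ k := by
          rcases hab with h' | h'
          · by_contra hck; push_neg at hck; omega
          · exact h'
        by_cases hcb : c + 1 ≤ a + k
        · exact ⟨c + 1, by omega, hcb, by rw [abs_le]; omega, by omega⟩
        · exact ⟨c - 1, by omega, by omega, by rw [abs_le]; omega, by omega⟩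
    obtain ⟨c', hc'1, hc'2, hc'3, hc'4⟩ := hex
    obtain ⟨e, he⟩ : (2:ℤ) ∣ (m + c') := by omega
    refine ⟨(e, e - m), (hmem _).mpr ?_, ?_, ?_⟩
    · refine ⟨?_, ?_, ?_, ?_⟩ <;> · dsimp only; omega
    · dsimp only; omega
    · dsimp only
      rw [show e + (e - m) - c = c' - c by omega]
      exact hc'3
  constructor
  · refine ⟨hne.image _, ?_⟩
    intro x' hx' y' hy'
    obtain ⟨x, hx, rfl⟩ := Finset.mem_image.mp hx'
    obtain ⟨y, hy, rfl⟩ := Finset.mem_image.mp hy'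
    exact le_trans (tdist_le_dZ2 n x y) (hdiam x hx y hy)
  · intro τ hτ hsub
    apply Finset.Subset.antisymm hsub
    intro q hq
    obtain ⟨w1, hw1⟩ := ZMod.intCast_surjective q.1
    obtain ⟨w2, hw2⟩ := ZMod.intCast_surjective q.2
    have hprojw : proj n (w1, w2) = q := by
      unfold proj
      dsimp only
      rw [hw1, hw2]
    have key : ∀ x ∈ σ, ∃ s t : ℤ,
        |(w1 + w2) + (s + t) * n - (x.1 + x.2)| ≤ k ∧
        |(w1 - w2) + (s - t) * n - (x.1 - x.2)| ≤ k := by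
      intro x hx
      have hq' : tdist n q (proj n x) ≤ k :=
        hτ.2 q hq _ (hsub (Finset.mem_image_of_mem _ hx))
      rw [← hprojw] at hq'
      have hq'' : cZdist n (w1 : ZMod n) (x.1 : ZMod n)
          + cZdist n (w2 : ZMod n) (x.2 : ZMod n) ≤ k := hq'
      obtain ⟨s, hs⟩ := cZdist_lift n w1 x.1
      obtain ⟨t, ht⟩ := cZdist_lift n w2 x.2
      have hsum : |w1 + s * n - x.1| + |w2 + t * n - x.2| ≤ k := by linarith
      refine ⟨s, t, ?_, ?_⟩
      · have e : (w1 + w2) + (s + t) * n - (x.1 + x.2)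
            = (w1 + s * n - x.1) + (w2 + t * n - x.2) := by ring
        rw [e]
        exact le_trans (abs_add_le _ _) hsum
      · have e : (w1 - w2) + (s - t) * n - (x.1 - x.2)
            = (w1 + s * n - x.1) - (w2 + t * n - x.2) := by ring
        rw [e]
        have habs : |(w1 + s * n - x.1) - (w2 + t * n - x.2)|
            ≤ |w1 + s * n - x.1| + |w2 + t * n - x.2| := abs_sub _ _
        linarith
    have hnk : 2 * k + 2 ≤ (n : ℤ) := by omega
    have covU : ∀ m, a ≤ m → m ≤ a + k → ∃ p : ℤ, |(w1 + w2) + p * n - m| ≤ k := by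
      intro m h1 h2
      obtain ⟨x, hx, hxu, _⟩ := pick m b h1 h2 le_rfl (by omega)
      obtain ⟨s, t, hst1, hst2⟩ := key x hx
      rw [hxu] at hst1
      exact ⟨s + t, hst1⟩
    have covV : ∀ m, b ≤ m → m ≤ b + k → ∃ p : ℤ, |(w1 - w2) + p * n - m| ≤ k := by
      intro m h1 h2
      obtain ⟨x, hx, hxv, _⟩ := pick' m a h1 h2 le_rfl (by omega)
      obtain ⟨s, t, hst1, hst2⟩ := key x hx
      rw [hxv] at hst2
      exact ⟨s - t, hst2⟩
    obtain ⟨ps, hps1, hps2⟩ := gap_lemma (n) k (w1 + w2) a hk hnk covU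
    obtain ⟨qs, hqs1, hqs2⟩ := gap_lemma (n) k (w1 - w2) b hk hnk covV
    obtain ⟨xs, hxs, hxsu, hxsv⟩ := pick ((w1 + w2) + ps * n) ((w1 - w2) + qs * n) hps1 hps2 hqs1 hqs2
    obtain ⟨s, t, h1, h2⟩ := key xs hxs
    have hst : s + t = ps :=
      force_lemma n k (s + t) ps (w1 + w2) (xs.1 + xs.2) (by omega) hk h1 hxsu.symm
    have hst2 : s - t = qs := by
      have htri := abs_sub_le ((w1 - w2) + (s - t) * n) (xs.1 - xs.2) ((w1 - w2) + qs * n)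
      have htri2 : |(w1 - w2) + (s - t) * n - ((w1 - w2) + qs * n)| ≤ k + 1 := by linarith
      exact force_lemma n (k + 1) (s - t) qs (w1 - w2) ((w1 - w2) + qs * n)
        (by omega) (by omega) htri2 rfl
    have e1 : (w1 + s * n) + (w2 + t * n) = (w1 + w2) + ps * n := by rw [← hst]; ring
    have e2 : (w1 + s * n) - (w2 + t * n) = (w1 - w2) + qs * n := by rw [← hst2]; ring
    have hz : ((w1 + s * n, w2 + t * n) : ℤ × ℤ) ∈ σ := by
      rw [hmem]
      dsimp only
      exact ⟨by linarith, by linarith, by linarith, by linarith⟩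
    have hproj : proj n (w1 + s * n, w2 + t * n) = q := by
      unfold proj
      dsimp only
      rw [Prod.ext_iff]
      constructor
      · rw [← hw1]; push_cast; simp
      · rw [← hw2]; push_cast; simp
    rw [← hproj]
    exact Finset.mem_image_of_mem _ hz
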